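/- Consider the eight closed unit balls in R^4 centered at (0,0,0,0), (1,1,0,0), (1,0,1,0), (0,1,1,0), (1,1,1,1), (0,1,0,1), (1,0,0,1), (0,0,1,1). The intersection of all eight balls contains exactly the point (1/2,1/2,1/2,1/2), i.e. this point lies in every ball and is the unique such point. -/

import Mathlib

/-!
The centers `(0,0,0,0)` and `(1,1,1,1)` are at distance `2`, so in the strictly convex space
`ℝ⁴` their unit balls meet only in their midpoint `(1/2,1/2,1/2,1/2)`; this point is at
distance exactly `1` from each of the eight centers.
-/

open Metric

section StrictConvex

variable {E P : Type*} [NormedAddCommGroup E] [NormedSpace ℝ E] [StrictConvexSpace ℝ E]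
  [MetricSpace P] [NormedAddTorsor E P]

theorem closedBall_inter_closedBall_eq_singleton_midpoint {a b : P} {r : ℝ}
    (hab : dist a b = 2 * r) :
    closedBall a r ∩ closedBall b r = {midpoint ℝ a b} := by
  have hmid : dist a (midpoint ℝ a b) = r ∧ dist b (midpoint ℝ a b) = r := by
    rw [dist_left_midpoint, dist_right_midpoint, hab, Real.norm_two]
    constructor <;> ring
  ext x
  simp only [Set.mem_inter_iff, mem_closedBall, Set.mem_singleton_iff]
  constructor
  · rintro ⟨hxa, hxb⟩
    rw [dist_comm] at hxa
    -- the triangle inequality through `x` is then an equality, which pins `x` to the midpoint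
    have htri := dist_triangle a x b
    exact eq_midpoint_of_dist_eq_half (by linarith) (by linarith)
  · rintro rfl
    rw [dist_comm _ a, dist_comm _ b]
    exact ⟨hmid.1.le, hmid.2.le⟩

end StrictConvex

theorem EuclideanSpace.dist_toLp_four (x₀ x₁ x₂ x₃ y₀ y₁ y₂ y₃ : ℝ) :
    dist (WithLp.toLp 2 ![x₀, x₁, x₂, x₃]) (WithLp.toLp 2 ![y₀, y₁, y₂, y₃]) =
      √((x₀ - y₀) ^ 2 + (x₁ - y₁) ^ 2 + (x₂ - y₂) ^ 2 + (x₃ - y₃) ^ 2) := by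
  simp [EuclideanSpace.dist_eq, Fin.sum_univ_four, Real.dist_eq, sq_abs]

/-- The intersection of the eight closed unit balls in `ℝ^4` centered at
`(0,0,0,0), (1,1,0,0), (1,0,1,0), (0,1,1,0), (1,1,1,1), (0,1,0,1), (1,0,0,1), (0,0,1,1)`
is exactly the singleton `{(1/2,1/2,1/2,1/2)}`. -/
theorem stmt_4 (c : Fin 8 → EuclideanSpace ℝ (Fin 4))
    (hc : c = fun i => (WithLp.equiv 2 (Fin 4 → ℝ)).symm
      (![![0,0,0,0], ![1,1,0,0], ![1,0,1,0], ![0,1,1,0],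
         ![1,1,1,1], ![0,1,0,1], ![1,0,0,1], ![0,0,1,1]] i)) :
    (⋂ i : Fin 8, closedBall (c i) 1) =
      {(WithLp.equiv 2 (Fin 4 → ℝ)).symm ![1/2, 1/2, 1/2, 1/2]} := by
  have hball : ∀ i, (⋂ j, closedBall (c j) 1) ⊆ closedBall (c i) 1 :=
    Set.iInter_subset fun j => closedBall (c j) 1
  apply Set.Subset.antisymm
  · calc _ ⊆ closedBall (c 0) 1 ∩ closedBall (c 4) 1 := Set.subset_inter (hball 0) (hball 4)
      _ = {midpoint ℝ (c 0) (c 4)} := by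
          apply closedBall_inter_closedBall_eq_singleton_midpoint
          simp only [hc, WithLp.equiv_symm_apply, Matrix.cons_val]
          norm_num [EuclideanSpace.dist_toLp_four]
      _ = _ := by
          simp only [hc, WithLp.equiv_symm_apply, Matrix.cons_val]
          congr 1
          ext i
          fin_cases i <;> norm_num [midpoint_eq_smul_add]
  · refine Set.singleton_subset_iff.2 (Set.mem_iInter.2 fun i => ?_)
    subst hc
    fin_cases i <;> norm_num [mem_closedBall, EuclideanSpace.dist_toLp_four]
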